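/- arXiv:2106.04721 — 3 statements merged into one kernel-verified Lean document; each statement's English description precedes it below -/
import Mathlib

section
/- Let F : ℝ → ℝ be smooth with F(0) = 0, F(x) > 0 for x ∈ (0, ℓ], and F'(0) > 0. Define I(ℓ; ε) = ∫₀^ℓ exp(−(2/ε²) ∫₀^y F(t) dt) dy. Then as ε → 0⁺, I(ℓ; ε) / ((ε/2) √(π/F'(0))) → 1. -/
open Real Filter Topology Set intervalIntegral

theorem stmt4 (F : ℝ → ℝ) (hF : ContDiff ℝ (⊤ : ℕ∞) F) (ℓ : ℝ) (hℓ : 0 < ℓ)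
    (hF0 : F 0 = 0) (hFpos : ∀ x ∈ Set.Ioc 0 ℓ, 0 < F x) (hF' : 0 < deriv F 0) :
    Tendsto
      (fun ε : ℝ =>
        (∫ y in (0:ℝ)..ℓ, Real.exp (-(2 / ε ^ 2) * ∫ t in (0:ℝ)..y, F t)) /
          (ε / 2 * Real.sqrt (π / deriv F 0)))
      (𝓝[>] 0) (𝓝 1) := by
  set a : ℝ := deriv F 0 with ha
  have hFc : Continuous F := hF.continuous
  set g : ℝ → ℝ := fun y => ∫ t in (0:ℝ)..y, F t with hgdef
  -- g has derivative F
  have hgderiv : ∀ y : ℝ, HasDerivAt g (F y) y := fun y =>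
    intervalIntegral.integral_hasDerivAt_right (hFc.intervalIntegrable _ _)
      (hFc.stronglyMeasurableAtFilter _ _) hFc.continuousAt
  have hgc : Continuous g := continuous_iff_continuousAt.2 fun y => (hgderiv y).continuousAt
  have hg0 : g 0 = 0 := intervalIntegral.integral_same
  -- slope limit : F y / y → a
  have hFd : HasDerivAt F a 0 := (hF.differentiable (by simp) 0).hasDerivAt
  have hslope : Tendsto (fun y => F y / y) (𝓝[>] (0:ℝ)) (𝓝 a) := by
    have h := hasDerivAt_iff_tendsto_slope.mp hFd
    have h2 : Tendsto (slope F 0) (𝓝[>] (0:ℝ)) (𝓝 a) :=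
      h.mono_left (nhdsWithin_mono 0 (fun x hx => by
        simpa using (ne_of_gt (Set.mem_Ioi.mp hx))))
    refine h2.congr fun y => ?_
    simp [slope_def_field, hF0]
  -- L'Hopital : g y / y^2 → a / 2
  have hratio : Tendsto (fun y => g y / y ^ 2) (𝓝[>] (0:ℝ)) (𝓝 (a / 2)) := by
    apply HasDerivAt.lhopital_zero_nhdsGT (f' := F) (g' := fun y => 2 * y)
    · exact Filter.Eventually.of_forall fun y => hgderiv y
    · exact Filter.Eventually.of_forall fun y => by
        simpa using hasDerivAt_pow 2 y
    · filter_upwards [self_mem_nhdsWithin] with y hy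
      have : (0:ℝ) < y := hy
      positivity
    · have := hgc.tendsto 0
      rw [hg0] at this
      exact this.mono_left nhdsWithin_le_nhds
    · have : Tendsto (fun y : ℝ => y ^ 2) (𝓝 0) (𝓝 ((0:ℝ) ^ 2)) :=
        (continuous_pow 2).tendsto 0
      simpa using this.mono_left nhdsWithin_le_nhds
    · have h3 : Tendsto (fun y => (F y / y) / 2) (𝓝[>] (0:ℝ)) (𝓝 (a / 2)) :=
        hslope.div_const 2
      refine h3.congr fun y => ?_
      rw [div_div, mul_comm]
  -- pointwise limit
  have hpt : ∀ u : ℝ, 0 < u →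
      Tendsto (fun ε : ℝ => 2 / ε ^ 2 * g (ε * u)) (𝓝[>] (0:ℝ)) (𝓝 (a * u ^ 2)) := by
    intro u hu
    have h1 : Tendsto (fun ε : ℝ => ε * u) (𝓝[>] (0:ℝ)) (𝓝 (0:ℝ)) := by
      have := ((continuous_id.mul (continuous_const (y := u))).tendsto 0).mono_left
        (nhdsWithin_le_nhds (s := Set.Ioi (0:ℝ)))
      simpa [Pi.mul_def] using this
    have hmul : Tendsto (fun ε : ℝ => ε * u) (𝓝[>] (0:ℝ)) (𝓝[>] (0:ℝ)) :=
      tendsto_nhdsWithin_of_tendsto_nhds_of_eventually_within _ h1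
        (by filter_upwards [self_mem_nhdsWithin] with ε hε
            exact Set.mem_Ioi.mpr (mul_pos hε hu))
    have h2 : Tendsto (fun ε : ℝ => g (ε * u) / (ε * u) ^ 2) (𝓝[>] (0:ℝ)) (𝓝 (a / 2)) :=
      hratio.comp hmul
    have h3 : Tendsto (fun ε : ℝ => 2 * u ^ 2 * (g (ε * u) / (ε * u) ^ 2)) (𝓝[>] (0:ℝ))
        (𝓝 (2 * u ^ 2 * (a / 2))) := h2.const_mul _
    have heq : 2 * u ^ 2 * (a / 2) = a * u ^ 2 := by ring
    rw [heq] at h3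
    refine h3.congr' ?_
    filter_upwards [self_mem_nhdsWithin] with ε hε
    have hε0 : (ε:ℝ) ≠ 0 := ne_of_gt hε
    have hu0 : u ≠ 0 := ne_of_gt hu
    field_simp
  -- quadratic lower bound for g
  obtain ⟨η, hη0, hηℓ, hηF⟩ : ∃ η, 0 < η ∧ η ≤ ℓ ∧ ∀ t ∈ Set.Ioc 0 η, a / 2 * t ≤ F t := by
    have hev : ∀ᶠ y in 𝓝[>] (0:ℝ), a / 2 < F y / y :=
      hslope.eventually (eventually_gt_nhds (by linarith))
    rw [eventually_iff, mem_nhdsGT_iff_exists_Ioc_subset] at hev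
    obtain ⟨η', hη', hsub⟩ := hev
    refine ⟨min η' ℓ, lt_min (Set.mem_Ioi.mp hη') hℓ, min_le_right _ _, ?_⟩
    intro t ht
    have ht' : t ∈ Set.Ioc 0 η' := ⟨ht.1, ht.2.trans (min_le_left _ _)⟩
    have := hsub ht'
    have h2 : a / 2 < F t / t := this
    exact le_of_lt ((lt_div_iff₀ ht.1).mp h2)
  have hglb1 : ∀ y ∈ Set.Icc 0 η, a / 4 * y ^ 2 ≤ g y := by
    intro y hy
    have hint : (∫ t in (0:ℝ)..y, a / 2 * t) ≤ ∫ t in (0:ℝ)..y, F t := by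
      apply intervalIntegral.integral_mono_on hy.1
        ((continuous_const.mul continuous_id).intervalIntegrable _ _)
        (hFc.intervalIntegrable _ _)
      intro t ht
      rcases eq_or_lt_of_le ht.1 with h | h
      · simp [← h, hF0]
      · exact hηF t ⟨h, ht.2.trans hy.2⟩
    calc a / 4 * y ^ 2 = ∫ t in (0:ℝ)..y, a / 2 * t := by
          rw [intervalIntegral.integral_const_mul, integral_id]; ring
      _ ≤ g y := hint
  have hFnn : ∀ t ∈ Set.Icc (0:ℝ) ℓ, 0 ≤ F t := by
    intro t ht
    rcases eq_or_lt_of_le ht.1 with h | h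
    · simp [← h, hF0]
    · exact (hFpos t ⟨h, ht.2⟩).le
  set c : ℝ := min (a / 4) (a / 4 * η ^ 2 / ℓ ^ 2) with hcdef
  have hcpos : 0 < c := lt_min (by linarith) (by positivity)
  have hc : ∀ y ∈ Set.Icc (0:ℝ) ℓ, c * y ^ 2 ≤ g y := by
    intro y hy
    rcases le_or_gt y η with h | h
    · calc c * y ^ 2 ≤ a / 4 * y ^ 2 := by
            have := min_le_left (a / 4) (a / 4 * η ^ 2 / ℓ ^ 2)
            nlinarith [sq_nonneg y]
        _ ≤ g y := hglb1 y ⟨hy.1, h⟩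
    · have h1 : g η ≤ g y := by
        have hadd : (∫ t in (0:ℝ)..η, F t) + ∫ t in η..y, F t = ∫ t in (0:ℝ)..y, F t :=
          intervalIntegral.integral_add_adjacent_intervals
            (hFc.intervalIntegrable _ _) (hFc.intervalIntegrable _ _)
        have hnn : 0 ≤ ∫ t in η..y, F t := by
          apply intervalIntegral.integral_nonneg h.le
          intro t ht
          exact hFnn t ⟨hη0.le.trans ht.1, ht.2.trans hy.2⟩
        show (∫ t in (0:ℝ)..η, F t) ≤ ∫ t in (0:ℝ)..y, F t
        linarith
      have h2 : a / 4 * η ^ 2 ≤ g η := hglb1 η ⟨hη0.le, le_refl _⟩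
      have h3 : c * y ^ 2 ≤ a / 4 * η ^ 2 := by
        have hcle : c ≤ a / 4 * η ^ 2 / ℓ ^ 2 := min_le_right _ _
        have hy2 : y ^ 2 ≤ ℓ ^ 2 := by nlinarith [hy.2, hy.1]
        have hl2 : (0:ℝ) < ℓ ^ 2 := by positivity
        calc c * y ^ 2 ≤ a / 4 * η ^ 2 / ℓ ^ 2 * ℓ ^ 2 :=
              mul_le_mul hcle hy2 (sq_nonneg y) (by positivity)
          _ = a / 4 * η ^ 2 := by field_simp
      linarith
  -- dominated convergence
  set Φ : ℝ → ℝ → ℝ := fun ε u =>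
    Set.indicator (Set.Ioc 0 (ℓ / ε)) (fun u => Real.exp (-(2 / ε ^ 2) * g (ε * u))) u
    with hΦdef
  have key : Tendsto (fun ε => ∫ u, Φ ε u) (𝓝[>] (0:ℝ))
      (𝓝 (∫ u, Set.indicator (Set.Ioi 0) (fun u => Real.exp (-a * u ^ 2)) u)) := by
    apply MeasureTheory.tendsto_integral_filter_of_dominated_convergence
      (fun u => Real.exp (-(2 * c) * u ^ 2))
    · refine Filter.Eventually.of_forall fun ε => ?_
      have hcont : Continuous fun u => Real.exp (-(2 / ε ^ 2) * g (ε * u)) :=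
        Real.continuous_exp.comp
          (continuous_const.mul (hgc.comp (continuous_const.mul continuous_id)))
      exact hcont.aestronglyMeasurable.indicator measurableSet_Ioc
    · filter_upwards [self_mem_nhdsWithin] with ε hε
      have hε0 : (0:ℝ) < ε := hε
      refine MeasureTheory.ae_of_all _ fun u => ?_
      rw [Real.norm_eq_abs, abs_of_nonneg
        (Set.indicator_nonneg (fun x _ => (Real.exp_pos _).le) u)]
      by_cases hu : u ∈ Set.Ioc 0 (ℓ / ε)
      · rw [Set.indicator_of_mem hu]
        apply Real.exp_le_exp.2
        have hmem : ε * u ∈ Set.Icc (0:ℝ) ℓ := by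
          constructor
          · exact (mul_pos hε0 hu.1).le
          · have := (le_div_iff₀ hε0).mp hu.2
            linarith [this]
        have hgl := hc (ε * u) hmem
        have hε2 : (0:ℝ) < ε ^ 2 := by positivity
        have h4 : 2 * c * u ^ 2 ≤ 2 / ε ^ 2 * g (ε * u) := by
          rw [div_mul_eq_mul_div, le_div_iff₀ hε2]
          nlinarith [hgl]
        calc -(2 / ε ^ 2) * g (ε * u) = -(2 / ε ^ 2 * g (ε * u)) := by ring
          _ ≤ -(2 * c * u ^ 2) := neg_le_neg h4
          _ = -(2 * c) * u ^ 2 := by ring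
      · rw [Set.indicator_of_notMem hu]
        positivity
    · exact integrable_exp_neg_mul_sq (by positivity)
    · refine MeasureTheory.ae_of_all _ fun u => ?_
      rcases le_or_gt u 0 with hu | hu
      · have hz : ∀ ε : ℝ, Φ ε u = 0 := fun ε =>
          Set.indicator_of_notMem (fun h => absurd h.1 (not_lt.2 hu)) _
        have hz2 : Set.indicator (Set.Ioi (0:ℝ)) (fun u => Real.exp (-a * u ^ 2)) u = 0 :=
          Set.indicator_of_notMem (by simpa using hu) _
        rw [hz2]
        simpa [hz] using (tendsto_const_nhds :
          Tendsto (fun _ : ℝ => (0:ℝ)) (𝓝[>] (0:ℝ)) (𝓝 0))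
      · rw [Set.indicator_of_mem (Set.mem_Ioi.mpr hu)]
        have hval : Tendsto (fun ε : ℝ => Real.exp (-(2 / ε ^ 2) * g (ε * u)))
            (𝓝[>] (0:ℝ)) (𝓝 (Real.exp (-a * u ^ 2))) := by
          have h5 := (Real.continuous_exp.tendsto (-(a * u ^ 2))).comp (hpt u hu).neg
          simp only [Function.comp_def] at h5
          rw [show Real.exp (-a * u ^ 2) = Real.exp (-(a * u ^ 2)) by rw [neg_mul]]
          exact h5.congr fun ε => by simp only [neg_mul]
        refine hval.congr' ?_
        have hmem : Set.Ioo (0:ℝ) (ℓ / u) ∈ 𝓝[>] (0:ℝ) :=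
          Ioo_mem_nhdsGT_of_mem ⟨le_refl _, div_pos hℓ hu⟩
        filter_upwards [hmem] with ε hε
        have hεu : u ≤ ℓ / ε := by
          rw [le_div_iff₀ hε.1]
          have := (lt_div_iff₀ hu).mp hε.2
          linarith
        simp only [hΦdef]
        exact (Set.indicator_of_mem (Set.mem_Ioc.mpr ⟨hu, hεu⟩)
          (fun u => Real.exp (-(2 / ε ^ 2) * g (ε * u)))).symm
  -- compute the limit value
  have hlimval : (∫ u, Set.indicator (Set.Ioi (0:ℝ)) (fun u => Real.exp (-a * u ^ 2)) u)
      = Real.sqrt (π / a) / 2 := by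
    rw [MeasureTheory.integral_indicator measurableSet_Ioi]
    exact integral_gaussian_Ioi a
  have hLpos : 0 < Real.sqrt (π / a) := Real.sqrt_pos.2 (div_pos pi_pos hF')
  have hkey2 : Tendsto (fun ε => (∫ u, Φ ε u) / (Real.sqrt (π / a) / 2)) (𝓝[>] (0:ℝ))
      (𝓝 1) := by
    have h := key.div_const (Real.sqrt (π / a) / 2)
    rw [hlimval, div_self (by positivity)] at h
    exact h
  refine hkey2.congr' ?_
  filter_upwards [self_mem_nhdsWithin] with ε hε
  have hε0 : (0:ℝ) < ε := hε
  have hεne : (ε:ℝ) ≠ 0 := ne_of_gt hε0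
  -- compute ∫ Φ ε as an interval integral
  have hΦint : (∫ u, Φ ε u) = ∫ u in (0:ℝ)..(ℓ / ε), Real.exp (-(2 / ε ^ 2) * g (ε * u)) := by
    simp only [hΦdef]
    rw [MeasureTheory.integral_indicator measurableSet_Ioc]
    rw [intervalIntegral.integral_of_le (by positivity : (0:ℝ) ≤ ℓ / ε)]
  -- change of variables
  have hcov : (∫ y in (0:ℝ)..ℓ, Real.exp (-(2 / ε ^ 2) * g y))
      = ε * ∫ u in (0:ℝ)..(ℓ / ε), Real.exp (-(2 / ε ^ 2) * g (ε * u)) := by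
    rw [intervalIntegral.integral_comp_mul_left
      (fun y => Real.exp (-(2 / ε ^ 2) * g y)) hεne]
    rw [mul_zero, mul_div_cancel₀ _ hεne, smul_eq_mul, ← mul_assoc,
      mul_inv_cancel₀ hεne, one_mul]
  have hg_eq : (∫ y in (0:ℝ)..ℓ, Real.exp (-(2 / ε ^ 2) * ∫ t in (0:ℝ)..y, F t))
      = ∫ y in (0:ℝ)..ℓ, Real.exp (-(2 / ε ^ 2) * g y) := by rw [hgdef]
  have hsne : Real.sqrt (π / a) ≠ 0 := ne_of_gt hLpos
  rw [hΦint, hg_eq, hcov]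
  field_simp
end

section
/- Let F : ℝ → ℝ be smooth with F(0) = 0, F > 0 on (0, ℓ], and F'(0) > 0. Define I(x; ε) = ∫₀ˣ exp(−(2/ε²)∫₀^y F(t) dt) dy. Then for every c > 0: lim_{ε→0⁺} I(c ε^α; ε) / I(ℓ; ε) equals 1 if 0 < α < 1, equals erf(c √(F'(0))) if α = 1, and equals 0 if α > 1. -/
open Real Filter Topology Set intervalIntegral

open MeasureTheory


lemma auxG_hasDerivAt (F : ℝ → ℝ) (hF : Continuous F) (y : ℝ) :
    HasDerivAt (fun x => ∫ t in (0:ℝ)..x, F t) (F y) y :=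
  intervalIntegral.integral_hasDerivAt_right (hF.intervalIntegrable _ _)
    (hF.stronglyMeasurableAtFilter _ _) hF.continuousAt

lemma auxG_cont (F : ℝ → ℝ) (hF : Continuous F) :
    Continuous (fun x => ∫ t in (0:ℝ)..x, F t) :=
  continuous_iff_continuousAt.2 fun y => (auxG_hasDerivAt F hF y).continuousAt

lemma aux_ratio (F : ℝ → ℝ) (hF : ContDiff ℝ (⊤ : ℕ∞) F) (hF0 : F 0 = 0) :
    Tendsto (fun y => (∫ t in (0:ℝ)..y, F t) / y ^ 2) (𝓝[>] 0)
      (𝓝 (deriv F 0 / 2)) := by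
  have hFc : Continuous F := hF.continuous
  have hG := auxG_hasDerivAt F hFc
  apply HasDerivAt.lhopital_zero_right_on_Ioo (f' := F) (g' := fun y => 2 * y)
    (b := 1) one_pos (fun x _ => hG x)
  · intro x _
    simpa using hasDerivAt_pow 2 x
  · intro x hx
    have := hx.1
    positivity
  · have : Tendsto (fun y => ∫ t in (0:ℝ)..y, F t) (𝓝 0) (𝓝 (∫ t in (0:ℝ)..0, F t)) :=
      ((auxG_cont F hFc).tendsto 0)
    simpa using this.mono_left nhdsWithin_le_nhds
  · have : Tendsto (fun y : ℝ => y ^ 2) (𝓝 0) (𝓝 (0 ^ 2)) :=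
      (continuous_pow 2).tendsto 0
    simpa using this.mono_left nhdsWithin_le_nhds
  · have hslope : Tendsto (fun y => F y / y) (𝓝[≠] 0) (𝓝 (deriv F 0)) := by
      have h := (hF.differentiable (by simp) 0).hasDerivAt
      rw [hasDerivAt_iff_tendsto_slope] at h
      refine h.congr (fun y => ?_)
      simp [slope, hF0, inv_mul_eq_div]
    have h2 : Tendsto (fun y => F y / y / 2) (𝓝[>] 0) (𝓝 (deriv F 0 / 2)) :=
      (hslope.mono_left (nhdsWithin_mono _ fun y hy => ne_of_gt hy)).div_const 2
    refine h2.congr (fun y => ?_)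
    rw [div_div]
    ring_nf

lemma aux_ptwise (F : ℝ → ℝ) (hF : ContDiff ℝ (⊤ : ℕ∞) F) (hF0 : F 0 = 0)
    (u : ℝ) (hu : 0 < u) :
    Tendsto (fun ε : ℝ => Real.exp (-(2 / ε ^ 2) * ∫ t in (0:ℝ)..(ε * u), F t))
      (𝓝[>] 0) (𝓝 (Real.exp (-deriv F 0 * u ^ 2))) := by
  have h1 : Tendsto (fun ε : ℝ => ε * u) (𝓝[>] 0) (𝓝[>] 0) := by
    apply tendsto_nhdsWithin_of_tendsto_nhds_of_eventually_within
    · have : Tendsto (fun ε : ℝ => ε * u) (𝓝 0) (𝓝 (0 * u)) :=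
        (continuous_id.mul continuous_const).tendsto 0
      simpa using this.mono_left nhdsWithin_le_nhds
    · filter_upwards [self_mem_nhdsWithin] with ε (hε : 0 < ε)
      exact mul_pos hε hu
  have h2 := (aux_ratio F hF hF0).comp h1
  have h3 : Tendsto (fun ε : ℝ => -(2 * u ^ 2) *
      ((∫ t in (0:ℝ)..(ε * u), F t) / (ε * u) ^ 2)) (𝓝[>] 0)
      (𝓝 (-(2 * u ^ 2) * (deriv F 0 / 2))) := h2.const_mul _
  have h4 : Tendsto (fun ε : ℝ => -(2 / ε ^ 2) * ∫ t in (0:ℝ)..(ε * u), F t)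
      (𝓝[>] 0) (𝓝 (-deriv F 0 * u ^ 2)) := by
    have heq : -(2 * u ^ 2) * (deriv F 0 / 2) = -deriv F 0 * u ^ 2 := by ring
    rw [← heq]
    refine h3.congr' ?_
    filter_upwards [self_mem_nhdsWithin] with ε (hε : 0 < ε)
    have hεu : (ε * u) ^ 2 ≠ 0 := by positivity
    have hε2 : (ε : ℝ) ^ 2 ≠ 0 := by positivity
    field_simp
  exact (Real.continuous_exp.tendsto _).comp h4

lemma aux_quad (F : ℝ → ℝ) (hF : ContDiff ℝ (⊤ : ℕ∞) F) (ℓ : ℝ) (hℓ : 0 < ℓ)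
    (hF0 : F 0 = 0) (hFpos : ∀ x ∈ Set.Ioc 0 ℓ, 0 < F x) (hF' : 0 < deriv F 0) :
    ∃ b > 0, ∀ y ∈ Icc 0 ℓ, b / 2 * y ^ 2 ≤ ∫ t in (0:ℝ)..y, F t := by
  set a := deriv F 0 with ha
  set G := fun y : ℝ => ∫ t in (0:ℝ)..y, F t with hGdef
  have hFc : Continuous F := hF.continuous
  have hev : ∀ᶠ y in 𝓝[>] (0:ℝ), a / 4 < G y / y ^ 2 :=
    (aux_ratio F hF hF0).eventually (eventually_gt_nhds (by linarith))
  rw [eventually_iff, mem_nhdsGT_iff_exists_Ioc_subset] at hev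
  obtain ⟨δ', hδ', hsub⟩ := hev
  rw [mem_Ioi] at hδ'
  set δ := min δ' ℓ with hδdef
  have hδpos : 0 < δ := lt_min hδ' hℓ
  have hδℓ : δ ≤ ℓ := min_le_right _ _
  have hlow : ∀ y ∈ Ioc (0:ℝ) δ, a / 4 * y ^ 2 ≤ G y := by
    intro y hy
    have h := hsub ⟨hy.1, hy.2.trans (min_le_left _ _)⟩
    rw [mem_setOf_eq] at h
    have hy2 : (0:ℝ) < y ^ 2 := pow_pos hy.1 2
    calc a / 4 * y ^ 2 ≤ G y / y ^ 2 * y ^ 2 := by nlinarith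
      _ = G y := div_mul_cancel₀ _ hy2.ne'
  refine ⟨a / 2 * (δ / ℓ) ^ 2,
    mul_pos (by linarith) (pow_pos (div_pos hδpos hℓ) 2), ?_⟩
  intro y hy
  rcases eq_or_lt_of_le hy.1 with h0 | h0
  · simp [G, ← h0]
  rcases le_or_gt y δ with hyδ | hyδ
  · have h := hlow y ⟨h0, hyδ⟩
    have hδℓ2 : (δ / ℓ) ^ 2 ≤ 1 := by
      rw [sq_le_one_iff_abs_le_one, abs_div, abs_of_pos hδpos, abs_of_pos hℓ,
        div_le_one hℓ]
      exact hδℓ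
    have h2 : a / 2 * (δ / ℓ) ^ 2 / 2 * y ^ 2 ≤ a / 4 * y ^ 2 := by
      have h3 : a / 4 * (δ / ℓ) ^ 2 ≤ a / 4 * 1 :=
        mul_le_mul_of_nonneg_left hδℓ2 (by linarith)
      nlinarith [sq_nonneg y]
    exact le_trans h2 h
  · have hGδ : a / 4 * δ ^ 2 ≤ G δ := hlow δ ⟨hδpos, le_refl _⟩
    have hmono : G δ ≤ G y := by
      have hi1 : IntervalIntegrable F volume 0 δ := hFc.intervalIntegrable _ _
      have hi2 : IntervalIntegrable F volume δ y := hFc.intervalIntegrable _ _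
      have hadd : G δ + ∫ t in δ..y, F t = G y :=
        intervalIntegral.integral_add_adjacent_intervals hi1 hi2
      have hpos : 0 ≤ ∫ t in δ..y, F t := by
        apply intervalIntegral.integral_nonneg hyδ.le
        intro t ht
        exact (hFpos t ⟨lt_of_lt_of_le hδpos ht.1, ht.2.trans hy.2⟩).le
      linarith
    have hyl : y ≤ ℓ := hy.2
    have h1 : a / 2 * (δ / ℓ) ^ 2 / 2 * y ^ 2 ≤ a / 4 * δ ^ 2 := by
      have hy2 : y ^ 2 ≤ ℓ ^ 2 := by nlinarith
      have : (δ / ℓ) ^ 2 * y ^ 2 ≤ δ ^ 2 := by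
        rw [div_pow, div_mul_eq_mul_div, div_le_iff₀ (by positivity)]
        nlinarith [mul_le_mul_of_nonneg_left hy2 (sq_nonneg δ)]
      nlinarith
    calc a / 2 * (δ / ℓ) ^ 2 / 2 * y ^ 2 ≤ a / 4 * δ ^ 2 := h1
      _ ≤ G δ := hGδ
      _ ≤ G y := hmono

lemma aux_dct (F : ℝ → ℝ) (hF : ContDiff ℝ (⊤ : ℕ∞) F) (ℓ : ℝ) (hℓ : 0 < ℓ)
    (hF0 : F 0 = 0) (hFpos : ∀ x ∈ Set.Ioc 0 ℓ, 0 < F x) (hF' : 0 < deriv F 0)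
    (U : ℝ → ℝ) (hU : ∀ᶠ ε in 𝓝[>] (0:ℝ), 0 < U ε ∧ ε * U ε ≤ ℓ)
    (V : Set ℝ) (hVm : MeasurableSet V) (hVsub : V ⊆ Ioi 0)
    (hin : ∀ u ∈ V, ∀ᶠ ε in 𝓝[>] (0:ℝ), u ≤ U ε)
    (hout : ∀ u : ℝ, 0 < u → u ∉ V → ∀ᶠ ε in 𝓝[>] (0:ℝ), U ε < u) :
    Tendsto (fun ε : ℝ => ∫ u in (0:ℝ)..U ε,
        Real.exp (-(2 / ε ^ 2) * ∫ t in (0:ℝ)..(ε * u), F t))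
      (𝓝[>] 0) (𝓝 (∫ u in V, Real.exp (-deriv F 0 * u ^ 2))) := by
  have hFc : Continuous F := hF.continuous
  set a := deriv F 0 with ha
  set G := fun y : ℝ => ∫ t in (0:ℝ)..y, F t with hGdef
  have hGc : Continuous G := auxG_cont F hFc
  obtain ⟨b, hb, hquad⟩ := aux_quad F hF ℓ hℓ hF0 hFpos hF'
  set φ : ℝ → ℝ → ℝ := fun ε u => Real.exp (-(2 / ε ^ 2) * G (ε * u)) with hφ
  have hφc : ∀ ε, Continuous (φ ε) := by
    intro ε
    exact Real.continuous_exp.comp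
      ((continuous_const).mul (hGc.comp ((continuous_const).mul continuous_id)))
  -- rewrite as integrals of indicators over ℝ
  have hrw : ∀ᶠ ε in 𝓝[>] (0:ℝ),
      (∫ u in (0:ℝ)..U ε, φ ε u) = ∫ u, (Ioc (0:ℝ) (U ε)).indicator (φ ε) u := by
    filter_upwards [hU] with ε hε
    rw [intervalIntegral.integral_of_le hε.1.le, MeasureTheory.integral_indicator measurableSet_Ioc]
  have hrhs : (∫ u in V, Real.exp (-a * u ^ 2)) =
      ∫ u, V.indicator (fun u => Real.exp (-a * u ^ 2)) u :=
    (MeasureTheory.integral_indicator hVm).symm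
  rw [hrhs]
  apply Tendsto.congr' (EventuallyEq.symm hrw)
  apply MeasureTheory.tendsto_integral_filter_of_dominated_convergence
    (fun u => Real.exp (-b * u ^ 2))
  · filter_upwards with ε
    exact ((hφc ε).aestronglyMeasurable).indicator measurableSet_Ioc
  · filter_upwards [hU, self_mem_nhdsWithin] with ε hε (hεpos : 0 < ε)
    filter_upwards with u
    by_cases hu : u ∈ Ioc 0 (U ε)
    · rw [Set.indicator_of_mem hu]
      rw [Real.norm_eq_abs, abs_of_pos (Real.exp_pos _)]
      apply Real.exp_le_exp.2
      have hy : ε * u ∈ Icc 0 ℓ := by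
        constructor
        · exact mul_nonneg hεpos.le hu.1.le
        · calc ε * u ≤ ε * U ε := by
                exact mul_le_mul_of_nonneg_left hu.2 hεpos.le
            _ ≤ ℓ := hε.2
      have hq := hquad (ε * u) hy
      have hε2 : (0:ℝ) < 2 / ε ^ 2 := by positivity
      have := mul_le_mul_of_nonneg_left hq hε2.le
      have heq : 2 / ε ^ 2 * (b / 2 * (ε * u) ^ 2) = b * u ^ 2 := by
        field_simp
      nlinarith
    · rw [Set.indicator_of_notMem hu]
      simp only [norm_zero]
      positivity
  · exact integrable_exp_neg_mul_sq hb
  · filter_upwards with u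
    by_cases hu : u ∈ V
    · have h0u : (0:ℝ) < u := hVsub hu
      rw [Set.indicator_of_mem hu]
      apply Tendsto.congr' ?_ (aux_ptwise F hF hF0 u h0u)
      filter_upwards [hin u hu] with ε hε
      have hmem : u ∈ Ioc 0 (U ε) := ⟨h0u, hε⟩
      exact (Set.indicator_of_mem hmem (φ ε)).symm
    · rw [Set.indicator_of_notMem hu]
      rcases le_or_gt u 0 with h0u | h0u
      · apply tendsto_const_nhds.congr'
        filter_upwards with ε
        rw [Set.indicator_of_notMem (fun h => absurd h.1 (not_lt.2 h0u))]
      · apply tendsto_const_nhds.congr'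
        filter_upwards [hout u h0u hu] with ε hε
        rw [Set.indicator_of_notMem (fun h => absurd h.2 (not_le.2 hε))]

lemma aux_cov (F : ℝ → ℝ) (ε x : ℝ) (hε : ε ≠ 0) :
    (∫ y in (0:ℝ)..x, Real.exp (-(2 / ε ^ 2) * ∫ t in (0:ℝ)..y, F t)) =
      ε * ∫ u in (0:ℝ)..(x / ε),
        Real.exp (-(2 / ε ^ 2) * ∫ t in (0:ℝ)..(ε * u), F t) := by
  have h := intervalIntegral.integral_comp_mul_right
      (a := 0) (b := x / ε)
      (fun y => Real.exp (-(2 / ε ^ 2) * ∫ t in (0:ℝ)..y, F t)) hε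
  simp only [zero_mul, div_mul_cancel₀ _ hε, smul_eq_mul] at h
  have h2 : (∫ u in (0:ℝ)..(x / ε),
      Real.exp (-(2 / ε ^ 2) * ∫ t in (0:ℝ)..(ε * u), F t)) =
      ε⁻¹ * ∫ y in (0:ℝ)..x, Real.exp (-(2 / ε ^ 2) * ∫ t in (0:ℝ)..y, F t) := by
    simp_rw [mul_comm ε]
    exact h
  rw [h2, ← mul_assoc, mul_inv_cancel₀ hε, one_mul]

noncomputable def erf (x : ℝ) : ℝ := (2 / Real.sqrt π) * ∫ z in (0:ℝ)..x, Real.exp (-z ^ 2)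

theorem stmt6 (F : ℝ → ℝ) (hF : ContDiff ℝ (⊤ : ℕ∞) F) (ℓ : ℝ) (hℓ : 0 < ℓ)
    (hF0 : F 0 = 0) (hFpos : ∀ x ∈ Set.Ioc 0 ℓ, 0 < F x) (hF' : 0 < deriv F 0)
    (I : ℝ → ℝ → ℝ)
    (hI : ∀ x ε, I x ε = ∫ y in (0:ℝ)..x, Real.exp (-(2 / ε ^ 2) * ∫ t in (0:ℝ)..y, F t))
    (c : ℝ) (hc : 0 < c) (α : ℝ) :
    ((0 < α ∧ α < 1) →
      Tendsto (fun ε : ℝ => I (c * ε ^ α) ε / I ℓ ε) (𝓝[>] 0) (𝓝 1)) ∧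
    (α = 1 →
      Tendsto (fun ε : ℝ => I (c * ε ^ α) ε / I ℓ ε) (𝓝[>] 0)
        (𝓝 (erf (c * Real.sqrt (deriv F 0))))) ∧
    (1 < α →
      Tendsto (fun ε : ℝ => I (c * ε ^ α) ε / I ℓ ε) (𝓝[>] 0) (𝓝 0)) := by
  have hFc : Continuous F := hF.continuous
  obtain ⟨b, hb, hquad⟩ := aux_quad F hF ℓ hℓ hF0 hFpos hF'
  set a := deriv F 0 with ha
  have hπa : 0 < π / a := div_pos Real.pi_pos hF'
  have hKpos : 0 < Real.sqrt (π / a) / 2 := by positivity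
  set K := Real.sqrt (π / a) / 2 with hK
  -- the denominator
  have hden : Tendsto (fun ε : ℝ => I ℓ ε / ε) (𝓝[>] 0) (𝓝 K) := by
    have hdct := aux_dct F hF ℓ hℓ hF0 hFpos hF' (fun ε => ℓ / ε) ?_ (Ioi 0)
      measurableSet_Ioi (subset_refl _) ?_ ?_
    rotate_left
    · filter_upwards [self_mem_nhdsWithin] with ε (hε : 0 < ε)
      refine ⟨div_pos hℓ hε, ?_⟩
      rw [mul_comm, div_mul_cancel₀ ℓ hε.ne']
    · intro u hu
      rw [mem_Ioi] at hu
      filter_upwards [Ioo_mem_nhdsGT_of_mem ⟨le_refl (0:ℝ), div_pos hℓ hu⟩] with ε hε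
      rw [le_div_iff₀ hε.1]
      have := (lt_div_iff₀ hu).1 hε.2
      nlinarith
    · intro u hu h
      exact absurd (mem_Ioi.2 hu) h
    rw [integral_gaussian_Ioi a] at hdct
    apply hdct.congr'
    filter_upwards [self_mem_nhdsWithin] with ε (hε : 0 < ε)
    rw [hI, aux_cov F ε ℓ hε.ne', mul_comm ε, mul_div_cancel_right₀ _ hε.ne']
  have hIℓpos : ∀ᶠ ε in 𝓝[>] (0:ℝ), 0 < I ℓ ε := by
    filter_upwards [hden.eventually (eventually_gt_nhds (half_lt_self hKpos)),
      self_mem_nhdsWithin] with ε h1 (h2 : 0 < ε)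
    have h3 : 0 < I ℓ ε / ε := lt_trans (by positivity) h1
    by_contra h
    push_neg at h
    have := div_nonpos_of_nonpos_of_nonneg h h2.le
    linarith
  refine ⟨?_, ?_, ?_⟩
  -- Case 0 < α < 1
  · rintro ⟨hα0, hα1⟩
    have hx0 : Tendsto (fun ε : ℝ => c * ε ^ α) (𝓝[>] 0) (𝓝 0) := by
      have h1 : ContinuousAt (fun ε : ℝ => ε ^ α) 0 :=
        Real.continuousAt_rpow_const 0 α (Or.inr hα0.le)
      have h2 : Tendsto (fun ε : ℝ => c * ε ^ α) (𝓝 0) (𝓝 (c * (0:ℝ) ^ α)) :=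
        h1.tendsto.const_mul c
      have h3 := h2.mono_left (nhdsWithin_le_nhds (s := Ioi (0:ℝ)))
      simpa [Real.zero_rpow hα0.ne'] using h3
    have hnum : Tendsto (fun ε : ℝ => I (c * ε ^ α) ε / ε) (𝓝[>] 0) (𝓝 K) := by
      have hdct := aux_dct F hF ℓ hℓ hF0 hFpos hF' (fun ε => c * ε ^ α / ε) ?_ (Ioi 0)
        measurableSet_Ioi (subset_refl _) ?_ ?_
      rotate_left
      · filter_upwards [hx0.eventually (eventually_lt_nhds hℓ), self_mem_nhdsWithin]
          with ε h1 (h2 : 0 < ε)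
        refine ⟨div_pos (mul_pos hc (Real.rpow_pos_of_pos h2 α)) h2, ?_⟩
        rw [mul_comm ε, div_mul_cancel₀ _ h2.ne']
        exact h1.le
      · intro u _
        have hatop : Tendsto (fun ε : ℝ => c * ε ^ α / ε) (𝓝[>] 0) atTop := by
          have h1 : Tendsto (fun ε : ℝ => ε ^ (α - 1)) (𝓝[>] 0) atTop := by
            have h2 : Tendsto (fun x : ℝ => x ^ (1 - α)) atTop atTop :=
              tendsto_rpow_atTop (by linarith)
            apply (h2.comp tendsto_inv_nhdsGT_zero).congr'
            filter_upwards [self_mem_nhdsWithin] with ε (hε : 0 < ε)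
            simp only [Function.comp_apply]
            rw [Real.inv_rpow hε.le, ← Real.rpow_neg hε.le]
            norm_num
          have h3 := h1.const_mul_atTop hc
          apply h3.congr'
          filter_upwards [self_mem_nhdsWithin] with ε (hε : 0 < ε)
          rw [Real.rpow_sub hε, Real.rpow_one]
          ring
        exact hatop.eventually_ge_atTop u
      · intro u hu h
        exact absurd (mem_Ioi.2 hu) h
      rw [integral_gaussian_Ioi a] at hdct
      apply hdct.congr'
      filter_upwards [self_mem_nhdsWithin] with ε (hε : 0 < ε)
      rw [hI, aux_cov F ε (c * ε ^ α) hε.ne', mul_comm ε, mul_div_cancel_right₀ _ hε.ne']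
    have hfinal := hnum.div hden hKpos.ne'
    rw [div_self hKpos.ne'] at hfinal
    apply hfinal.congr'
    filter_upwards [self_mem_nhdsWithin, hIℓpos] with ε (hε : 0 < ε) hpos
    simp only [Pi.div_apply]
    rw [div_div_div_cancel_right₀]
    exact hε.ne'
  -- Case α = 1
  · intro hα1
    subst hα1
    have hnum : Tendsto (fun ε : ℝ => I (c * ε ^ (1:ℝ)) ε / ε) (𝓝[>] 0)
        (𝓝 (∫ u in Ioc (0:ℝ) c, Real.exp (-a * u ^ 2))) := by
      have hdct := aux_dct F hF ℓ hℓ hF0 hFpos hF' (fun ε => c * ε ^ (1:ℝ) / ε)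
        ?_ (Ioc 0 c) measurableSet_Ioc (fun u hu => hu.1) ?_ ?_
      rotate_left
      · filter_upwards [Ioo_mem_nhdsGT_of_mem ⟨le_refl (0:ℝ), div_pos hℓ hc⟩] with ε hε
        have hε0 : (0:ℝ) < ε := hε.1
        rw [Real.rpow_one, mul_div_assoc, div_self hε0.ne', mul_one]
        refine ⟨hc, ?_⟩
        have := (lt_div_iff₀ hc).1 hε.2
        nlinarith
      · intro u hu
        filter_upwards [self_mem_nhdsWithin] with ε (hε : 0 < ε)
        rw [Real.rpow_one, mul_div_assoc, div_self hε.ne', mul_one]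
        exact hu.2
      · intro u hu hnotin
        have hcu : c < u := lt_of_not_ge fun h => hnotin ⟨hu, h⟩
        filter_upwards [self_mem_nhdsWithin] with ε (hε : 0 < ε)
        rw [Real.rpow_one, mul_div_assoc, div_self hε.ne', mul_one]
        exact hcu
      apply hdct.congr'
      filter_upwards [self_mem_nhdsWithin] with ε (hε : 0 < ε)
      rw [hI, aux_cov F ε (c * ε ^ (1:ℝ)) hε.ne', mul_comm ε, mul_div_cancel_right₀ _ hε.ne']
    have hsa : (0:ℝ) < Real.sqrt a := Real.sqrt_pos.2 hF'
    have hLval : (∫ u in Ioc (0:ℝ) c, Real.exp (-a * u ^ 2)) =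
        (Real.sqrt a)⁻¹ * ∫ z in (0:ℝ)..(c * Real.sqrt a), Real.exp (-z ^ 2) := by
      rw [← intervalIntegral.integral_of_le hc.le]
      have h := intervalIntegral.integral_comp_mul_right (a := 0) (b := c)
        (fun z => Real.exp (-z ^ 2)) hsa.ne'
      simp only [zero_mul, smul_eq_mul] at h
      rw [← h]
      apply intervalIntegral.integral_congr
      intro u _
      show Real.exp (-a * u ^ 2) = Real.exp (-(u * Real.sqrt a) ^ 2)
      have h2 : (u * Real.sqrt a) ^ 2 = a * u ^ 2 := by
        rw [mul_pow, Real.sq_sqrt hF'.le]; ring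
      rw [h2]
      ring_nf
    have hfinal := hnum.div hden hKpos.ne'
    have hval : (∫ u in Ioc (0:ℝ) c, Real.exp (-a * u ^ 2)) / K =
        erf (c * Real.sqrt a) := by
      rw [hLval, erf, hK, Real.sqrt_div Real.pi_pos.le]
      have hsπ : (0:ℝ) < Real.sqrt π := Real.sqrt_pos.2 Real.pi_pos
      field_simp
    rw [hval] at hfinal
    apply hfinal.congr'
    filter_upwards [self_mem_nhdsWithin, hIℓpos] with ε (hε : 0 < ε) hpos
    simp only [Pi.div_apply]
    rw [div_div_div_cancel_right₀]
    exact hε.ne'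
  -- Case 1 < α
  · intro hα
    have hα0 : (0:ℝ) < α := lt_trans one_pos hα
    have hx0 : Tendsto (fun ε : ℝ => c * ε ^ α) (𝓝[>] 0) (𝓝 0) := by
      have h1 : ContinuousAt (fun ε : ℝ => ε ^ α) 0 :=
        Real.continuousAt_rpow_const 0 α (Or.inr hα0.le)
      have h2 : Tendsto (fun ε : ℝ => c * ε ^ α) (𝓝 0) (𝓝 (c * (0:ℝ) ^ α)) :=
        h1.tendsto.const_mul c
      have h3 := h2.mono_left (nhdsWithin_le_nhds (s := Ioi (0:ℝ)))
      simpa [Real.zero_rpow hα0.ne'] using h3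
    have hupper : Tendsto (fun ε : ℝ => c * ε ^ (α - 1) / (I ℓ ε / ε)) (𝓝[>] 0)
        (𝓝 0) := by
      have h1 : Tendsto (fun ε : ℝ => c * ε ^ (α - 1)) (𝓝[>] 0) (𝓝 0) := by
        have h2 : ContinuousAt (fun ε : ℝ => ε ^ (α - 1)) 0 :=
          Real.continuousAt_rpow_const 0 (α - 1) (Or.inr (by linarith))
        have h3 : Tendsto (fun ε : ℝ => c * ε ^ (α - 1)) (𝓝 0)
            (𝓝 (c * (0:ℝ) ^ (α - 1))) := h2.tendsto.const_mul c
        have h4 := h3.mono_left (nhdsWithin_le_nhds (s := Ioi (0:ℝ)))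
        simpa [Real.zero_rpow (show α - 1 ≠ 0 by linarith)] using h4
      have := h1.div hden hKpos.ne'
      rw [zero_div] at this
      exact this
    apply tendsto_of_tendsto_of_tendsto_of_le_of_le' tendsto_const_nhds hupper
    · filter_upwards [hIℓpos, self_mem_nhdsWithin] with ε hpos (hε : 0 < ε)
      apply div_nonneg _ hpos.le
      rw [hI]
      apply intervalIntegral.integral_nonneg
        (mul_nonneg hc.le (Real.rpow_nonneg hε.le α))
      intro t _
      exact (Real.exp_pos _).le
    · filter_upwards [hIℓpos, self_mem_nhdsWithin,
        hx0.eventually (eventually_lt_nhds hℓ)] with ε hpos (hε : 0 < ε) hxℓ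
      have hxnn : 0 ≤ c * ε ^ α := mul_nonneg hc.le (Real.rpow_nonneg hε.le α)
      have hstep1 : I (c * ε ^ α) ε ≤ c * ε ^ α := by
        rw [hI]
        have hmono : (∫ y in (0:ℝ)..(c * ε ^ α),
            Real.exp (-(2 / ε ^ 2) * ∫ t in (0:ℝ)..y, F t)) ≤
            ∫ y in (0:ℝ)..(c * ε ^ α), (1:ℝ) := by
          apply intervalIntegral.integral_mono_on hxnn
          · exact (Real.continuous_exp.comp ((continuous_const).mul
              (auxG_cont F hFc))).intervalIntegrable _ _
          · exact intervalIntegrable_const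
          · intro y hy
            rw [Real.exp_le_one_iff]
            have hGy : 0 ≤ ∫ t in (0:ℝ)..y, F t := by
              have := hquad y ⟨hy.1, hy.2.trans hxℓ.le⟩
              nlinarith [sq_nonneg y]
            have h2 : (0:ℝ) ≤ 2 / ε ^ 2 := by positivity
            nlinarith
        simpa using hmono
      calc I (c * ε ^ α) ε / I ℓ ε ≤ (c * ε ^ α) / I ℓ ε :=
            (div_le_div_iff_of_pos_right hpos).2 hstep1
        _ = c * ε ^ (α - 1) / (I ℓ ε / ε) := by
            rw [Real.rpow_sub hε, Real.rpow_one]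
            field_simp
end

section
/- Let F : [0, ℓ] → ℝ be continuous with F(0) = 0, F > 0 on (0, ℓ], F differentiable at 0 with F'(0) > 0; let ε > 0 be fixed, k(y) = exp(−(2/ε²)∫₀^y F), p(x) = (∫₀ˣ k)/(∫₀^ℓ k), L(x) = ∫ₓ^ℓ ∫₀ˣ k(z)k(u)(∫_u^z p/k) du dz, and E(x) = (2/ε²) L(x)/∫₀ˣ k. Then lim_{x→0⁺} (Ψ(ε) − E(x))/x² = 1/(3ε²), where Ψ(ε) = (2/ε²) ∫₀^ℓ k(u) (∫₀^u p(y)/k(y) dy) du. -/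
/-!
Write `K`, `G`, `H` for the primitives from `0` of `k`, `p / k` and `k * G`. Splitting
`∫ y in u..z, p y / k y = G z - G u` separates the double integral:
`L = K * ∫ₓ^ℓ k G - H * ∫ₓ^ℓ k`. Since `K x + ∫ₓ^ℓ k = K ℓ`, this gives the exact identity
`Ψ - E x = (2 / ε²) K(ℓ) H(x) / K(x)`.
As `k` is continuous with `k 0 = 1`, l'Hôpital's rule applied three times gives `K x ~ x`,
`G x ~ x² / (2 K ℓ)` and `H x ~ x³ / (6 K ℓ)`, so `(Ψ - E x) / x² → (2 / ε²) / 6`.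
-/

open Real Filter Topology Set intervalIntegral

section Primitive

variable {f : ℝ → ℝ} {a b : ℝ}

lemma ContinuousOn.intervalIntegrable_of_mem_Icc (hf : ContinuousOn f (Icc a b)) {x y : ℝ}
    (hx : x ∈ Icc a b) (hy : y ∈ Icc a b) : IntervalIntegrable f MeasureTheory.volume x y :=
  (hf.mono (uIcc_subset_Icc hx hy)).intervalIntegrable

lemma ContinuousOn.tendsto_nhdsGT_left (hab : a < b) (hf : ContinuousOn f (Icc a b)) :
    Tendsto f (𝓝[>] a) (𝓝 (f a)) := by
  have h := (hf a (left_mem_Icc.2 hab.le)).mono Ioo_subset_Icc_self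
  rwa [ContinuousWithinAt, nhdsWithin_Ioo_eq_nhdsGT hab] at h

lemma ContinuousOn.continuousOn_primitive_Icc (hab : a ≤ b) (hf : ContinuousOn f (Icc a b)) :
    ContinuousOn (fun x => ∫ t in a..x, f t) (Icc a b) := by
  have h := continuousOn_primitive_interval (a := a) (b := b) (μ := MeasureTheory.volume) (f := f)
    (by rw [uIcc_of_le hab]; exact hf.integrableOn_Icc)
  rwa [uIcc_of_le hab] at h

lemma ContinuousOn.hasDerivAt_primitive (hf : ContinuousOn f (Icc a b)) {x : ℝ}
    (hx : x ∈ Ioo a b) :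
    HasDerivAt (fun u => ∫ t in a..u, f t) (f x) x :=
  integral_hasDerivAt_right
    (hf.intervalIntegrable_of_mem_Icc (left_mem_Icc.2 (hx.1.trans hx.2).le)
      (Ioo_subset_Icc_self hx))
    ((hf.mono Ioo_subset_Icc_self).stronglyMeasurableAtFilter isOpen_Ioo x hx)
    (hf.continuousAt (Icc_mem_nhds hx.1 hx.2))

lemma ContinuousOn.tendsto_primitive_nhdsGT_left (hab : a < b) (hf : ContinuousOn f (Icc a b)) :
    Tendsto (fun x => ∫ t in a..x, f t) (𝓝[>] a) (𝓝 0) := by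
  simpa using (hf.continuousOn_primitive_Icc hab.le).tendsto_nhdsGT_left hab

lemma ContinuousOn.tendsto_primitive_div_pow_succ (hb : 0 < b) (hf : ContinuousOn f (Icc 0 b))
    {n : ℕ} {c : ℝ} (h : Tendsto (fun x => f x / x ^ n) (𝓝[>] 0) (𝓝 c)) :
    Tendsto (fun x => (∫ t in (0:ℝ)..x, f t) / x ^ (n + 1)) (𝓝[>] 0)
      (𝓝 (c / (n + 1))) := by
  refine HasDerivAt.lhopital_zero_right_on_Ioo hb (fun x hx => hf.hasDerivAt_primitive hx)
    (fun x _ => hasDerivAt_pow (n + 1) x) (fun x hx => by have := hx.1; positivity)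
    (hf.tendsto_primitive_nhdsGT_left hb) ?_ ?_
  · exact tendsto_nhdsWithin_of_tendsto_nhds ((continuous_pow (n + 1)).tendsto' 0 0 (by simp))
  · refine (h.div_const (n + 1)).congr fun x => ?_
    push_cast
    rw [div_div, mul_comm]

lemma ContinuousOn.tendsto_primitive_div_nhdsGT_zero (hb : 0 < b)
    (hf : ContinuousOn f (Icc 0 b)) :
    Tendsto (fun x => (∫ t in (0:ℝ)..x, f t) / x) (𝓝[>] 0) (𝓝 (f 0)) := by
  simpa using hf.tendsto_primitive_div_pow_succ hb (n := 0)
    (by simpa using hf.tendsto_nhdsGT_left hb)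

end Primitive

section Weighted

variable {k g : ℝ → ℝ} {a b : ℝ}

lemma integral_integral_mul_integral_eq (hk : ContinuousOn k (Icc a b))
    (hg : ContinuousOn g (Icc a b)) {x : ℝ} (hx : x ∈ Icc a b) :
    (∫ z in x..b, ∫ u in a..x, k z * k u * ∫ y in u..z, g y)
      = (∫ u in a..x, k u) * (∫ z in x..b, k z * ∫ y in a..z, g y)
        - (∫ u in a..x, k u * ∫ y in a..u, g y) * ∫ z in x..b, k z := by
  have ha : a ∈ Icc a b := left_mem_Icc.2 (hx.1.trans hx.2)
  have hb : b ∈ Icc a b := right_mem_Icc.2 (hx.1.trans hx.2)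
  have hkG : ContinuousOn (fun u => k u * ∫ y in a..u, g y) (Icc a b) :=
    hk.mul (hg.continuousOn_primitive_Icc (hx.1.trans hx.2))
  have inner : ∀ z ∈ uIcc x b, (∫ u in a..x, k z * k u * ∫ y in u..z, g y)
      = (∫ u in a..x, k u) * (k z * ∫ y in a..z, g y)
        - (∫ u in a..x, k u * ∫ y in a..u, g y) * k z := by
    intro z hz
    have hz : z ∈ Icc a b := uIcc_subset_Icc hx hb hz
    have split : EqOn (fun u => k z * k u * ∫ y in u..z, g y)
        (fun u => (k z * ∫ y in a..z, g y) * k u - k z * (k u * ∫ y in a..u, g y))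
        (uIcc a x) := by
      intro u hu
      have hu : u ∈ Icc a b := uIcc_subset_Icc ha hx hu
      dsimp only
      rw [← integral_interval_sub_left (hg.intervalIntegrable_of_mem_Icc ha hz)
        (hg.intervalIntegrable_of_mem_Icc ha hu)]
      ring
    rw [integral_congr split, integral_sub ((hk.intervalIntegrable_of_mem_Icc ha hx).const_mul _)
      ((hkG.intervalIntegrable_of_mem_Icc ha hx).const_mul _), integral_const_mul,
      integral_const_mul]
    ring
  rw [integral_congr inner, integral_sub ((hkG.intervalIntegrable_of_mem_Icc hx hb).const_mul _)
    ((hk.intervalIntegrable_of_mem_Icc hx hb).const_mul _), integral_const_mul, integral_const_mul]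

lemma integral_mul_primitive_sub_div_eq (hk : ContinuousOn k (Icc a b))
    (hg : ContinuousOn g (Icc a b)) {x : ℝ} (hx : x ∈ Icc a b)
    (hKx : (∫ u in a..x, k u) ≠ 0) :
    (∫ u in a..b, k u * ∫ y in a..u, g y)
      - (∫ z in x..b, ∫ u in a..x, k z * k u * ∫ y in u..z, g y) / ∫ u in a..x, k u
      = (∫ u in a..b, k u) * (∫ u in a..x, k u * ∫ y in a..u, g y) / ∫ u in a..x, k u := by
  have ha : a ∈ Icc a b := left_mem_Icc.2 (hx.1.trans hx.2)
  have hb : b ∈ Icc a b := right_mem_Icc.2 (hx.1.trans hx.2)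
  have hkG : ContinuousOn (fun u => k u * ∫ y in a..u, g y) (Icc a b) :=
    hk.mul (hg.continuousOn_primitive_Icc (hx.1.trans hx.2))
  rw [integral_integral_mul_integral_eq hk hg hx,
    ← integral_add_adjacent_intervals (hk.intervalIntegrable_of_mem_Icc ha hx)
      (hk.intervalIntegrable_of_mem_Icc hx hb),
    ← integral_add_adjacent_intervals (hkG.intervalIntegrable_of_mem_Icc ha hx)
      (hkG.intervalIntegrable_of_mem_Icc hx hb)]
  field_simp
  ring

lemma tendsto_primitive_mul_primitive_div_pow_three {ℓ c : ℝ} (hℓ : 0 < ℓ)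
    (hk : ContinuousOn k (Icc 0 ℓ)) (hk0 : k 0 = 1) (hg : ContinuousOn g (Icc 0 ℓ))
    (hgc : Tendsto (fun x => g x / x) (𝓝[>] 0) (𝓝 c)) :
    Tendsto (fun x => (∫ u in (0:ℝ)..x, k u * ∫ y in (0:ℝ)..u, g y) / x ^ 3) (𝓝[>] 0)
      (𝓝 (c / 6)) := by
  have hG : Tendsto (fun x => (∫ y in (0:ℝ)..x, g y) / x ^ 2) (𝓝[>] 0) (𝓝 (c / 2)) := by
    convert hg.tendsto_primitive_div_pow_succ hℓ (n := 1) (by simpa using hgc) using 2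
    norm_num
  have hkG : Tendsto (fun x => k x * (∫ y in (0:ℝ)..x, g y) / x ^ 2) (𝓝[>] 0)
      (𝓝 (c / 2)) := by
    simpa only [mul_div_assoc, hk0, one_mul] using (hk.tendsto_nhdsGT_left hℓ).mul hG
  have hkG_cont : ContinuousOn (fun u => k u * ∫ y in (0:ℝ)..u, g y) (Icc 0 ℓ) :=
    hk.mul (hg.continuousOn_primitive_Icc hℓ.le)
  convert hkG_cont.tendsto_primitive_div_pow_succ hℓ hkG using 2
  push_cast
  ring

lemma tendsto_primitive_div_mul_div {ℓ C : ℝ} (hℓ : 0 < ℓ) (hk : ContinuousOn k (Icc 0 ℓ))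
    (hk0 : k 0 = 1) (hC : C ≠ 0) :
    Tendsto (fun x => (∫ t in (0:ℝ)..x, k t) / (C * k x) / x) (𝓝[>] 0) (𝓝 (1 / C)) := by
  have h := (hk.tendsto_primitive_div_nhdsGT_zero hℓ).div
    ((hk.tendsto_nhdsGT_left hℓ).const_mul C) (by simpa [hk0] using hC)
  simp only [hk0, mul_one] at h
  refine h.congr fun x => ?_
  simp only [Pi.div_apply]
  ring

lemma tendsto_integral_mul_primitive_sub_div_sq {ℓ : ℝ} (hℓ : 0 < ℓ)
    (hk : ContinuousOn k (Icc 0 ℓ)) (hk_pos : ∀ y ∈ Icc 0 ℓ, 0 < k y) (hk0 : k 0 = 1)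
    (hg : ∀ y, g y = (∫ t in (0:ℝ)..y, k t) / ((∫ t in (0:ℝ)..ℓ, k t) * k y)) :
    Tendsto (fun x => ((∫ u in (0:ℝ)..ℓ, k u * ∫ y in (0:ℝ)..u, g y)
        - (∫ z in x..ℓ, ∫ u in (0:ℝ)..x, k z * k u * ∫ y in u..z, g y)
          / ∫ u in (0:ℝ)..x, k u) / x ^ 2) (𝓝[>] 0) (𝓝 (1 / 6)) := by
  set K := fun x => ∫ t in (0:ℝ)..x, k t
  have hK_pos : ∀ x ∈ Ioc 0 ℓ, 0 < K x := fun x hx =>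
    intervalIntegral_pos_of_pos_on (hk.intervalIntegrable_of_mem_Icc
      (left_mem_Icc.2 hℓ.le) (Ioc_subset_Icc_self hx))
      (fun y hy => hk_pos y ⟨hy.1.le, hy.2.le.trans hx.2⟩) hx.1
  have hKℓ := hK_pos ℓ (right_mem_Ioc.2 hℓ)
  have hg_cont : ContinuousOn g (Icc 0 ℓ) :=
    ((hk.continuousOn_primitive_Icc hℓ.le).div (continuousOn_const.mul hk)
      fun y hy => (mul_pos hKℓ (hk_pos y hy)).ne').congr fun y _ => hg y
  have hg_lim : Tendsto (fun x => g x / x) (𝓝[>] 0) (𝓝 (1 / K ℓ)) := by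
    simpa only [hg] using tendsto_primitive_div_mul_div hℓ hk hk0 hKℓ.ne'
  have hH_lim := tendsto_primitive_mul_primitive_div_pow_three hℓ hk hk0 hg_cont hg_lim
  have key : ∀ x ∈ Ioo 0 ℓ,
      K ℓ * ((∫ u in (0:ℝ)..x, k u * ∫ y in (0:ℝ)..u, g y) / x ^ 3) / (K x / x)
        = ((∫ u in (0:ℝ)..ℓ, k u * ∫ y in (0:ℝ)..u, g y)
          - (∫ z in x..ℓ, ∫ u in (0:ℝ)..x, k z * k u * ∫ y in u..z, g y) / K x) / x ^ 2 := by
    intro x hx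
    have hKx := (hK_pos x (Ioo_subset_Ioc_self hx)).ne'
    rw [integral_mul_primitive_sub_div_eq hk hg_cont (Ioo_subset_Icc_self hx) hKx]
    simp only [K] at hKx ⊢
    field_simp [hx.1.ne']
  have hK_lim : Tendsto (fun x => K x / x) (𝓝[>] 0) (𝓝 1) := by
    simpa [hk0] using hk.tendsto_primitive_div_nhdsGT_zero hℓ
  have hval : K ℓ * (1 / K ℓ / 6) / 1 = 1 / 6 := by
    field_simp
  rw [← hval]
  refine ((hH_lim.const_mul _).div hK_lim one_ne_zero).congr' ?_
  filter_upwards [Ioo_mem_nhdsGT hℓ] with x hx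
  exact key x hx

end Weighted

theorem stmt13_general (ℓ : ℝ) (hℓ : 0 < ℓ) (F : ℝ → ℝ) (hF : ContinuousOn F (Set.Icc 0 ℓ))
    (ε : ℝ) (k p L E : ℝ → ℝ) (Ψ : ℝ)
    (hk : ∀ y, k y = Real.exp (-(2 / ε ^ 2) * ∫ t in (0:ℝ)..y, F t))
    (hp : ∀ x, p x = (∫ y in (0:ℝ)..x, k y) / (∫ y in (0:ℝ)..ℓ, k y))
    (hL : ∀ x, L x = ∫ z in x..ℓ, ∫ u in (0:ℝ)..x, k z * k u * ∫ y in u..z, p y / k y)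
    (hE : ∀ x, E x = 2 / ε ^ 2 * (L x / ∫ y in (0:ℝ)..x, k y))
    (hΨ : Ψ = 2 / ε ^ 2 * ∫ u in (0:ℝ)..ℓ, k u * ∫ y in (0:ℝ)..u, p y / k y) :
    Tendsto (fun x => (Ψ - E x) / x ^ 2) (𝓝[>] 0) (𝓝 (1 / (3 * ε ^ 2))) := by
  have hk_cont : ContinuousOn k (Icc 0 ℓ) :=
    (continuous_exp.comp_continuousOn
      (continuousOn_const.mul (hF.continuousOn_primitive_Icc hℓ.le))).congr fun y _ => hk y
  have hk0 : k 0 = 1 := by simp [hk]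
  have hpk : ∀ y, p y / k y = (∫ t in (0:ℝ)..y, k t) / ((∫ t in (0:ℝ)..ℓ, k t) * k y) :=
    fun y => by rw [hp, div_div]
  have h := tendsto_integral_mul_primitive_sub_div_sq hℓ hk_cont
    (fun y _ => hk y ▸ exp_pos _) hk0 hpk
  rw [show 1 / (3 * ε ^ 2) = 2 / ε ^ 2 * (1 / 6) by ring]
  refine (h.const_mul (2 / ε ^ 2)).congr fun x => ?_
  rw [hΨ, hE, hL]
  ring

theorem stmt13 (ℓ : ℝ) (hℓ : 0 < ℓ) (F : ℝ → ℝ) (hF : ContinuousOn F (Set.Icc 0 ℓ))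
    (hF0 : F 0 = 0) (hFpos : ∀ x ∈ Set.Ioc 0 ℓ, 0 < F x)
    (hFdiff : DifferentiableAt ℝ F 0) (hF' : 0 < deriv F 0)
    (ε : ℝ) (hε : 0 < ε) (k p L E : ℝ → ℝ) (Ψ : ℝ)
    (hk : ∀ y, k y = Real.exp (-(2 / ε ^ 2) * ∫ t in (0:ℝ)..y, F t))
    (hp : ∀ x, p x = (∫ y in (0:ℝ)..x, k y) / (∫ y in (0:ℝ)..ℓ, k y))
    (hL : ∀ x, L x = ∫ z in x..ℓ, ∫ u in (0:ℝ)..x, k z * k u * ∫ y in u..z, p y / k y)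
    (hE : ∀ x, E x = 2 / ε ^ 2 * (L x / ∫ y in (0:ℝ)..x, k y))
    (hΨ : Ψ = 2 / ε ^ 2 * ∫ u in (0:ℝ)..ℓ, k u * ∫ y in (0:ℝ)..u, p y / k y) :
    Tendsto (fun x => (Ψ - E x) / x ^ 2) (𝓝[>] 0) (𝓝 (1 / (3 * ε ^ 2))) :=
  stmt13_general ℓ hℓ F hF ε k p L E Ψ hk hp hL hE hΨ
end
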